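/- arXiv:2110.01088 — 3 statements merged into one kernel-verified Lean document; each statement's English description precedes it below -/
import Mathlib

section
/- A holomorphic function f(z) = Σ aₙ zⁿ on the open unit disc belongs to A^∞(𝔻) (i.e., f and all its derivatives extend continuously to the closed disc) if and only if nᵏ aₙ → 0 as n → ∞ for every k ∈ ℕ. -/
/-!
Both directions go through the Taylor coefficients of `f⁽ᵏ⁾` at `0`, which are
`(m + k)! / m! · a (m + k)`. If `f⁽ᵏ⁺¹⁾` extends continuously to the closed disc, it is bounded
there, and Cauchy's estimate on the circles of radius `r → 1` bounds its Taylor coefficients by the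
same constant; hence `(m + 1) ^ (k + 1) ‖a (m + k + 1)‖` is bounded and `nᵏ aₙ → 0`. Conversely,
if `n ^ (k + 2) aₙ → 0` the Taylor coefficients of `f⁽ᵏ⁾` are absolutely summable, so its Taylor
series converges uniformly on the closed disc to a continuous function, and it converges to `f⁽ᵏ⁾`
on the open disc because `f⁽ᵏ⁾` is analytic there.
-/

open Filter Topology Metric FormalMultilinearSeries
open scoped Nat ENNReal

theorem FormalMultilinearSeries.nnnorm_le_radius_ofScalars_of_summable {𝕜 : Type*}
    [NontriviallyNormedField 𝕜] {c : ℕ → 𝕜} {z : 𝕜} (h : Summable fun n => c n * z ^ n) :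
    (‖z‖₊ : ℝ≥0∞) ≤ (ofScalars 𝕜 c).radius :=
  (ofScalars 𝕜 c).le_radius_of_tendsto (l := 0) <| by
    simpa [norm_mul, norm_pow] using h.tendsto_atTop_zero.norm

theorem HasFPowerSeriesAt.iteratedDeriv_eq_factorial_mul {𝕜 : Type*} [NontriviallyNormedField 𝕜]
    [CompleteSpace 𝕜] [CharZero 𝕜] {f : 𝕜 → 𝕜} {c : ℕ → 𝕜} {x : 𝕜}
    (h : HasFPowerSeriesAt f (ofScalars 𝕜 c) x) (n : ℕ) :
    iteratedDeriv n f x = n ! * c n := by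
  have hc := ofScalars_series_injective 𝕜 𝕜
    (h.eq_formalMultilinearSeries h.analyticAt.hasFPowerSeriesAt)
  rw [hc, mul_div_cancel₀ _ (by exact_mod_cast n.factorial_ne_zero)]

theorem iteratedDeriv_iteratedDeriv {𝕜 F : Type*} [NontriviallyNormedField 𝕜] [NormedAddCommGroup F]
    [NormedSpace 𝕜 F] (m k : ℕ) (f : 𝕜 → F) :
    iteratedDeriv m (iteratedDeriv k f) = iteratedDeriv (m + k) f := by
  simp only [iteratedDeriv_eq_iterate, Function.iterate_add_apply]

theorem Complex.norm_iteratedDeriv_le_of_forall_mem_ball_norm_le {F : Type*} [NormedAddCommGroup F]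
    [NormedSpace ℂ F] [CompleteSpace F] {f : ℂ → F} {c : ℂ} {R M : ℝ} (hR : 0 < R)
    (hf : DifferentiableOn ℂ f (ball c R)) (hM : ∀ z ∈ ball c R, ‖f z‖ ≤ M) (n : ℕ) :
    ‖iteratedDeriv n f c‖ ≤ n ! * M / R ^ n := by
  have hr : ∀ r ∈ Set.Ioo 0 R, ‖iteratedDeriv n f c‖ ≤ n ! * M / r ^ n := fun r hr =>
    norm_iteratedDeriv_le_of_forall_mem_sphere_norm_le n hr.1
      (hf.diffContOnCl_ball (closedBall_subset_ball hr.2))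
      fun z hz => hM z (closedBall_subset_ball hr.2 (sphere_subset_closedBall hz))
  have hlim : Tendsto (fun r : ℝ => n ! * M / r ^ n) (𝓝[<] R) (𝓝 (n ! * M / R ^ n)) :=
    ((continuousAt_const.div (continuousAt_pow R n) (pow_ne_zero n hR.ne')).tendsto).mono_left
      nhdsWithin_le_nhds
  exact ge_of_tendsto hlim (Filter.mem_of_superset (Ioo_mem_nhdsLT hR) hr)

theorem continuousOn_tsum_mul_pow {b : ℕ → ℂ} {R : ℝ} (hb : Summable fun n => ‖b n‖ * R ^ n) :
    ContinuousOn (fun z => ∑' n, b n * z ^ n) (closedBall 0 R) := by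
  refine continuousOn_tsum (fun n => (continuous_const.mul (continuous_pow n)).continuousOn) hb
    fun n z hz => ?_
  rw [norm_mul, norm_pow]
  gcongr
  exact mem_closedBall_zero_iff.mp hz

theorem Metric.eball_one {α : Type*} [PseudoMetricSpace α] (x : α) : eball x 1 = ball x 1 := by
  simpa using Metric.eball_coe (x := x) (ε := 1)

theorem one_le_radius_ofScalars_of_summable {a : ℕ → ℂ}
    (ha : ∀ z : ℂ, ‖z‖ < 1 → Summable fun n => a n * z ^ n) :
    1 ≤ (ofScalars ℂ a).radius :=
  ENNReal.le_of_forall_nnreal_lt fun r hr => by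
    simpa using nnnorm_le_radius_ofScalars_of_summable (ha r (by simpa using hr))

theorem hasFPowerSeriesOnBall_tsum_mul_pow {a : ℕ → ℂ}
    (ha : ∀ z : ℂ, ‖z‖ < 1 → Summable fun n => a n * z ^ n) :
    HasFPowerSeriesOnBall (fun w => ∑' n, a n * w ^ n) (ofScalars ℂ a) 0 1 := by
  have hsum : ofScalarsSum (E := ℂ) a = fun w => ∑' n, a n * w ^ n := by
    simpa only [smul_eq_mul] using ofScalarsSum_eq_tsum (E := ℂ) a
  have hr := one_le_radius_ofScalars_of_summable ha
  rw [← hsum]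
  exact ((ofScalars ℂ a).hasFPowerSeriesOnBall (zero_lt_one.trans_le hr)).mono one_pos hr

/-- The Taylor coefficients at `0` of the `k`-th derivative of `∑ aₙ zⁿ`; note that
`(m + 1).ascFactorial k = (m + k)! / m!`. -/
def iteratedDerivCoeff (k : ℕ) (a : ℕ → ℂ) (m : ℕ) : ℂ := (m + 1).ascFactorial k * a (m + k)

theorem iteratedDeriv_iteratedDeriv_tsum_mul_pow_zero {a : ℕ → ℂ}
    (ha : ∀ z : ℂ, ‖z‖ < 1 → Summable fun n => a n * z ^ n) (k m : ℕ) :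
    iteratedDeriv m (iteratedDeriv k fun w => ∑' n, a n * w ^ n) 0 =
      m ! * iteratedDerivCoeff k a m := by
  rw [iteratedDeriv_iteratedDeriv,
    (hasFPowerSeriesOnBall_tsum_mul_pow ha).hasFPowerSeriesAt.iteratedDeriv_eq_factorial_mul,
    ← Nat.factorial_mul_ascFactorial, iteratedDerivCoeff]
  push_cast
  ring

theorem analyticOnNhd_iteratedDeriv_tsum_mul_pow {a : ℕ → ℂ}
    (ha : ∀ z : ℂ, ‖z‖ < 1 → Summable fun n => a n * z ^ n) (k : ℕ) :
    AnalyticOnNhd ℂ (iteratedDeriv k fun w => ∑' n, a n * w ^ n) (ball 0 1) := by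
  rw [iteratedDeriv_eq_iterate, ← Metric.eball_one]
  exact (hasFPowerSeriesOnBall_tsum_mul_pow ha).analyticOnNhd.iterated_deriv k

theorem norm_iteratedDerivCoeff_le {a : ℕ → ℂ}
    (ha : ∀ z : ℂ, ‖z‖ < 1 → Summable fun n => a n * z ^ n) {k : ℕ} {M : ℝ}
    (hM : ∀ z ∈ ball (0 : ℂ) 1, ‖iteratedDeriv k (fun w => ∑' n, a n * w ^ n) z‖ ≤ M) (m : ℕ) :
    ‖iteratedDerivCoeff k a m‖ ≤ M := by
  have h := Complex.norm_iteratedDeriv_le_of_forall_mem_ball_norm_le one_pos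
    (analyticOnNhd_iteratedDeriv_tsum_mul_pow ha k).differentiableOn hM m
  rw [iteratedDeriv_iteratedDeriv_tsum_mul_pow_zero ha, norm_mul, one_pow, div_one,
    Complex.norm_natCast] at h
  exact le_of_mul_le_mul_left h (by positivity)

theorem iteratedDeriv_tsum_mul_pow {a : ℕ → ℂ}
    (ha : ∀ z : ℂ, ‖z‖ < 1 → Summable fun n => a n * z ^ n) (k : ℕ)
    (hk : 1 ≤ (ofScalars ℂ (iteratedDerivCoeff k a)).radius) {z : ℂ} (hz : z ∈ ball (0 : ℂ) 1) :
    iteratedDeriv k (fun w => ∑' n, a n * w ^ n) z = ∑' m, iteratedDerivCoeff k a m * z ^ m := by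
  have hcoeff : (fun m => iteratedDeriv m (iteratedDeriv k fun w => ∑' n, a n * w ^ n) 0 / m !) =
      iteratedDerivCoeff k a := by
    ext m
    rw [iteratedDeriv_iteratedDeriv_tsum_mul_pow_zero ha,
      mul_div_cancel_left₀ _ (by exact_mod_cast m.factorial_ne_zero)]
  have han : AnalyticOn ℂ (iteratedDeriv k fun w => ∑' n, a n * w ^ n) (eball 0 1) :=
    Metric.eball_one (0 : ℂ) ▸ (analyticOnNhd_iteratedDeriv_tsum_mul_pow ha k).analyticOn
  have hps := han.hasFPowerSeriesOnSubball one_pos (by rwa [hcoeff])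
  rw [hcoeff] at hps
  have hsum := (hps.hasSum (y := z) (by rwa [Metric.eball_one])).tsum_eq
  simp only [ofScalars_apply_eq, smul_eq_mul, zero_add] at hsum
  exact hsum.symm

theorem summable_pow_mul_norm_of_tendsto {a : ℕ → ℂ} {k : ℕ}
    (h : Tendsto (fun n : ℕ => (n : ℂ) ^ (k + 2) * a n) atTop (𝓝 0)) :
    Summable fun n : ℕ => (n : ℝ) ^ k * ‖a n‖ := by
  refine Summable.of_norm_bounded_eventually_nat (g := fun n : ℕ => ((n : ℝ) ^ 2)⁻¹)
    (Real.summable_nat_pow_inv.mpr one_lt_two) ?_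
  filter_upwards [h.norm.eventually (ge_mem_nhds (show ‖(0 : ℂ)‖ < 1 by simp)),
    eventually_ge_atTop 1] with n hn hn1
  rw [norm_mul, norm_pow, Complex.norm_natCast, pow_add] at hn
  rw [Real.norm_of_nonneg (by positivity), ← one_div, le_div_iff₀ (by positivity)]
  convert hn using 1
  ring

theorem summable_norm_iteratedDerivCoeff {a : ℕ → ℂ} {k : ℕ}
    (h : Summable fun n : ℕ => (n : ℝ) ^ k * ‖a n‖) :
    Summable fun m => ‖iteratedDerivCoeff k a m‖ := by
  refine ((summable_nat_add_iff k).mpr h).of_nonneg_of_le (fun _ => norm_nonneg _) fun m => ?_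
  rw [iteratedDerivCoeff, norm_mul, Complex.norm_natCast]
  gcongr
  exact_mod_cast Nat.ascFactorial_le_pow_add m k

theorem tendsto_pow_mul_of_norm_iteratedDerivCoeff_le {a : ℕ → ℂ} {k : ℕ} {M : ℝ}
    (h : ∀ m, ‖iteratedDerivCoeff (k + 1) a m‖ ≤ M) :
    Tendsto (fun n : ℕ => (n : ℂ) ^ k * a n) atTop (𝓝 0) := by
  have hdecay : Tendsto (fun m : ℕ => (k + 1) ^ k * M * (1 / ((m : ℝ) + 1))) atTop (𝓝 0) := by
    simpa using tendsto_one_div_add_atTop_nhds_zero_nat.const_mul ((k + 1) ^ k * M)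
  refine (tendsto_add_atTop_iff_nat (k + 1)).mp (squeeze_zero_norm (fun m => ?_) hdecay)
  have hm : ((m + 1 : ℕ) : ℝ) ^ (k + 1) * ‖a (m + (k + 1))‖ ≤ M := by
    refine le_trans ?_ (h m)
    rw [iteratedDerivCoeff, norm_mul, Complex.norm_natCast]
    gcongr
    exact_mod_cast Nat.pow_succ_le_ascFactorial (m + 1) (k + 1)
  have hmk : ((m + (k + 1) : ℕ) : ℝ) ≤ (k + 1) * (m + 1) := by
    push_cast; nlinarith
  rw [norm_mul, norm_pow, Complex.norm_natCast, mul_one_div, le_div_iff₀ (by positivity)]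
  calc ((m + (k + 1) : ℕ) : ℝ) ^ k * ‖a (m + (k + 1))‖ * (m + 1)
      ≤ ((k + 1) * (m + 1)) ^ k * ‖a (m + (k + 1))‖ * (m + 1) := by gcongr
    _ = (k + 1) ^ k * (((m + 1 : ℕ) : ℝ) ^ (k + 1) * ‖a (m + (k + 1))‖) := by
        rw [mul_pow]; push_cast; ring
    _ ≤ (k + 1) ^ k * M := by gcongr

/-- A holomorphic function `f z = Σ aₙ zⁿ` on the open unit disc belongs to `A^∞(𝔻)`
(i.e. `f` and all its derivatives extend continuously to the closed disc) iff
`nᵏ aₙ → 0` for every `k`. -/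
theorem stmt2 (a : ℕ → ℂ)
    (ha : ∀ z : ℂ, ‖z‖ < 1 → Summable fun n => a n * z ^ n) :
    ((∀ k : ℕ, ∃ g : ℂ → ℂ, ContinuousOn g (closedBall (0 : ℂ) 1) ∧
        ∀ z ∈ ball (0 : ℂ) 1,
          g z = iteratedDerivWithin k (fun w => ∑' n, a n * w ^ n) (ball (0 : ℂ) 1) z)
      ↔ ∀ k : ℕ, Tendsto (fun n : ℕ => (n : ℂ) ^ k * a n) atTop (𝓝 0)) := by
  constructor
  · intro H k
    obtain ⟨g, hg, hgf⟩ := H (k + 1)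
    obtain ⟨M, hM⟩ := (isCompact_closedBall (0 : ℂ) 1).exists_bound_of_continuousOn hg
    refine tendsto_pow_mul_of_norm_iteratedDerivCoeff_le (M := M)
      (norm_iteratedDerivCoeff_le ha fun z hz => ?_)
    rw [← iteratedDerivWithin_of_isOpen isOpen_ball hz, ← hgf z hz]
    exact hM z (ball_subset_closedBall hz)
  · intro H k
    have hb := summable_norm_iteratedDerivCoeff (summable_pow_mul_norm_of_tendsto (H (k + 2)))
    have hk : 1 ≤ (ofScalars ℂ (iteratedDerivCoeff k a)).radius := by
      simpa using (ofScalars ℂ (iteratedDerivCoeff k a)).le_radius_of_summable_norm (r := 1)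
        (by simpa using hb)
    refine ⟨_, continuousOn_tsum_mul_pow (by simpa using hb), fun z hz => ?_⟩
    rw [iteratedDerivWithin_of_isOpen isOpen_ball hz, iteratedDeriv_tsum_mul_pow ha k hk hz]
end

section
/- Let X ⊆ Y be F-spaces of complex sequences with X ≠ Y such that: (i) c₀₀ ⊆ X; (ii) for every infinite A ⊆ ℕ there exists y ∈ Y \ X supported in A; (iii) c₀₀ is dense in Y; (iv) X is closed under multiplication by indicator functions of subsets of ℕ. Then there exists a dense vector subspace F of Y with F ∩ X = {0}. -/
/-!
Since `c₀₀` is dense, `Y` has a dense sequence `(dᵢ)` of finitely supported vectors. Split `ℕ`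
into the infinitely many infinite fibres `Aₖ` of `n ↦ (unpair n).1` and pick `yₖ ∈ Y \ X`
supported in `Aₖ`. Then `F` is spanned by `f_j = d_{(unpair j).1} + ε_j y_j`, where `ε_j ≠ 0`
makes `ε_j y_j → 0`, so that each `dᵢ` is a limit of generators and `F` is dense. If a
combination `∑ c_j f_j` lies in `X`, removing its finitely supported part leaves
`∑ c_j ε_j y_j ∈ X`; restricting to `Aₖ` gives `c_k ε_k y_k ∈ X`, hence `c_k = 0`.
-/

open Filter Topology Submodule Set

theorem Nat.infinite_setOf_unpair_fst_eq (k : ℕ) : {n : ℕ | (Nat.unpair n).1 = k}.Infinite :=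
  Set.infinite_of_injective_forall_mem (f := Nat.pair k)
    (fun a b h => by simpa using congrArg (fun n => (Nat.unpair n).2) h) (by simp)

theorem Finsupp.eq_zero_of_linearCombination_mem {𝕜 α ι : Type*} [Field 𝕜]
    {W : Submodule 𝕜 (α → 𝕜)} (hW : ∀ w ∈ W, ∀ A : Set α, A.indicator w ∈ W)
    {q : α → ι} {a : ι → α → 𝕜} (ha : ∀ k, a k ∉ W) (hsupp : ∀ k n, q n ≠ k → a k n = 0)
    {c : ι →₀ 𝕜} (hc : Finsupp.linearCombination 𝕜 a c ∈ W) : c = 0 := by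
  ext k
  by_contra hk
  have hrestrict : (q ⁻¹' {k}).indicator (Finsupp.linearCombination 𝕜 a c) = c k • a k := by
    funext n
    by_cases hn : q n = k
    · rw [Set.indicator_of_mem (show n ∈ q ⁻¹' {k} from hn), Finsupp.linearCombination_apply,
        Finsupp.sum, Finset.sum_apply, Finset.sum_eq_single k
          (fun j _ hj => by simp [hsupp j n (hn.trans_ne (Ne.symm hj))])
          (fun hk' => by simp [Finsupp.notMem_support_iff.1 hk'])]
    · simp [Set.indicator_of_notMem (show n ∉ q ⁻¹' {k} from hn), hsupp k n hn]
  exact ha k ((smul_mem_iff W hk).1 (hrestrict ▸ hW _ hc _))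

theorem eq_zero_of_mem_span_add_of_map_mem {𝕜 Y α ι : Type*} [Field 𝕜] [AddCommGroup Y]
    [Module 𝕜 Y] (φ : Y →ₗ[𝕜] (α → 𝕜)) {W : Submodule 𝕜 (α → 𝕜)}
    (hW : ∀ w ∈ W, ∀ A : Set α, A.indicator w ∈ W) {u v : ι → Y} (hu : ∀ j, φ (u j) ∈ W)
    (hv : ∀ j, φ (v j) ∉ W) {q : α → ι} (hsupp : ∀ j n, q n ≠ j → φ (v j) n = 0)
    {z : Y} (hz : z ∈ span 𝕜 (range fun j => u j + v j)) (hφz : φ z ∈ W) : z = 0 := by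
  obtain ⟨c, rfl⟩ := (Finsupp.range_linearCombination 𝕜).ge hz
  have hsplit : φ (Finsupp.linearCombination 𝕜 (fun j => u j + v j) c) =
      Finsupp.linearCombination 𝕜 (φ ∘ u) c + Finsupp.linearCombination 𝕜 (φ ∘ v) c := by
    simp only [Finsupp.linearCombination_apply, Function.comp_apply, smul_add, Finsupp.sum_add,
      map_add, map_finsuppSum, map_smul]
  have hu' : Finsupp.linearCombination 𝕜 (φ ∘ u) c ∈ W := by
    rw [Finsupp.linearCombination_apply]
    exact sum_mem fun j _ => W.smul_mem _ (hu j)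
  have hc : c = 0 := Finsupp.eq_zero_of_linearCombination_mem hW hv hsupp
    ((W.add_mem_iff_right hu').1 (hsplit ▸ hφz))
  simp [hc]

theorem dense_span_range_add_of_tendsto_zero {R Y : Type*} [Semiring R] [AddCommMonoid Y]
    [Module R Y] [TopologicalSpace Y] [ContinuousAdd Y] {d : ℕ → Y} (hd : DenseRange d)
    {v : ℕ → Y} (hv : Tendsto v atTop (𝓝 0)) :
    Dense (span R (range fun j => d (Nat.unpair j).1 + v j) : Set Y) := by
  refine dense_closure.1 (hd.mono (range_subset_iff.2 fun i => ?_))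
  have hpair : Tendsto (Nat.pair i) atTop atTop :=
    tendsto_atTop_mono (Nat.right_le_pair i) tendsto_id
  have hlim : Tendsto (fun m => d i + v (Nat.pair i m)) atTop (𝓝 (d i)) := by
    simpa using tendsto_const_nhds.add (hv.comp hpair)
  exact mem_closure_of_tendsto hlim (Eventually.of_forall fun m =>
    subset_span ⟨Nat.pair i m, by simp⟩)

theorem exists_ne_zero_tendsto_smul_zero {𝕜 Y : Type*} [NontriviallyNormedField 𝕜]
    [AddCommMonoid Y] [Module 𝕜 Y] [TopologicalSpace Y] [ContinuousSMul 𝕜 Y]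
    [FirstCountableTopology Y] (y : ℕ → Y) :
    ∃ ε : ℕ → 𝕜, (∀ j, ε j ≠ 0) ∧ Tendsto (fun j => ε j • y j) atTop (𝓝 0) := by
  obtain ⟨U, hU⟩ := (𝓝 (0 : Y)).exists_antitone_basis
  have hsmall : ∀ j, ∃ ε : 𝕜, ε ≠ 0 ∧ ε • y j ∈ U j := fun j =>
    have hcont : Tendsto (fun c : 𝕜 => c • y j) (𝓝[≠] 0) (𝓝 0) := by
      have h : Continuous fun c : 𝕜 => c • y j := continuous_id.smul continuous_const
      simpa using (h.tendsto 0).mono_left nhdsWithin_le_nhds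
    ((hcont.eventually (hU.mem j)).and self_mem_nhdsWithin).exists.imp fun _ h => ⟨h.2, h.1⟩
  choose ε hε0 hεU using hsmall
  exact ⟨ε, hε0, hU.tendsto hεU⟩

theorem exists_denseRange_subset_span {R Y : Type*} [Semiring R] [TopologicalSpace R]
    [TopologicalSpace.SeparableSpace R] [AddCommMonoid Y] [Module R Y] [TopologicalSpace Y]
    [TopologicalSpace.PseudoMetrizableSpace Y] [ContinuousAdd Y] [ContinuousSMul R Y]
    {s : Set Y} (hs : s.Countable) (hdense : Dense (span R s : Set Y)) :
    ∃ d : ℕ → Y, DenseRange d ∧ ∀ i, d i ∈ span R s := by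
  have := (hs.isSeparable.span (R := R)).separableSpace
  obtain ⟨u, hu⟩ := TopologicalSpace.exists_dense_seq (span R s : Set Y)
  exact ⟨_, hdense.denseRange_val.comp hu continuous_subtype_val, fun i => (u i).2⟩

theorem mem_span_range_of_eventually_eq_zero {R Y : Type*} [Semiring R] [AddCommMonoid Y]
    [Module R Y] {φ : Y →ₗ[R] (ℕ → R)} (hφ : Function.Injective φ) {e : ℕ → Y}
    (he : ∀ n, φ (e n) = Pi.single n 1) {y : Y} {N : ℕ} (hy : ∀ n ≥ N, φ y n = 0) :
    y ∈ span R (range e) := by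
  have hsum : y = ∑ n ∈ Finset.range N, φ y n • e n := hφ <| funext fun m => by
    by_cases hm : m < N
    · simp [he, Pi.single_apply, hm]
    · simp [he, Pi.single_apply, hm, hy m (not_lt.1 hm)]
  rw [hsum]
  exact sum_mem fun n _ => smul_mem _ _ (subset_span ⟨n, rfl⟩)

theorem stmt15_general
    (X Y : Type*)
    [AddCommGroup X] [Module ℂ X]
    [AddCommGroup Y] [Module ℂ Y] [UniformSpace Y] [IsUniformAddGroup Y]
    [ContinuousSMul ℂ Y] [TopologicalSpace.MetrizableSpace Y]
    (ιX : X →ₗ[ℂ] (ℕ → ℂ)) (ιY : Y →ₗ[ℂ] (ℕ → ℂ))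
    (hιY : Function.Injective ιY)
    (hsub : Set.range ιX ⊆ Set.range ιY)
    (h1 : ∀ a : ℕ → ℂ, (∃ N, ∀ n ≥ N, a n = 0) → a ∈ Set.range ιX)
    (h2 : ∀ A : Set ℕ, A.Infinite →
      ∃ a ∈ Set.range ιY, a ∉ Set.range ιX ∧ ∀ n ∉ A, a n = 0)
    (h3 : Dense {y : Y | ∃ N, ∀ n ≥ N, ιY y n = 0})
    (h4 : ∀ a ∈ Set.range ιX, ∀ A : Set ℕ,
      A.indicator a ∈ Set.range ιX) :
    ∃ F : Submodule ℂ Y, Dense (F : Set Y) ∧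
      ∀ y ∈ F, ιY y ∈ Set.range ιX → y = 0 := by
  have hsingle (n : ℕ) : Pi.single n 1 ∈ LinearMap.range ιX :=
    h1 _ ⟨n + 1, fun m hm => Pi.single_eq_of_ne (by omega) _⟩
  choose e he using fun n => hsub (hsingle n)
  obtain ⟨d, hd, hdspan⟩ := exists_denseRange_subset_span (R := ℂ) (countable_range e)
    (h3.mono fun y hy => mem_span_range_of_eventually_eq_zero hιY he hy.choose_spec)
  have hdX (i : ℕ) : ιY (d i) ∈ LinearMap.range ιX :=
    (map_span_le ιY _ _).2 (forall_mem_range.2 fun n => he n ▸ hsingle n)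
      (mem_map_of_mem (hdspan i))
  choose a haY haX hasupp using fun k => h2 _ (Nat.infinite_setOf_unpair_fst_eq k)
  choose y hy using haY
  obtain ⟨ε, hε0, hεy⟩ := exists_ne_zero_tendsto_smul_zero (𝕜 := ℂ) y
  have hvX (j : ℕ) : ιY (ε j • y j) ∉ LinearMap.range ιX := by
    rw [map_smul, hy, smul_mem_iff _ (hε0 j)]
    exact haX j
  have hvsupp (j n : ℕ) (hn : (Nat.unpair n).1 ≠ j) : ιY (ε j • y j) n = 0 := by
    simp [hy, hasupp j n hn]
  exact ⟨span ℂ (range fun j => d (Nat.unpair j).1 + ε j • y j),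
    dense_span_range_add_of_tendsto_zero hd hεy, fun z hz hzX =>
      eq_zero_of_mem_span_add_of_map_mem ιY h4 (u := fun j => d (Nat.unpair j).1)
        (fun j => hdX _) hvX hvsupp hz hzX⟩

/-- Algebraic genericity lemma.  Let `X ⊆ Y`, `X ≠ Y`, be F-spaces of complex sequences
such that (i) `c₀₀ ⊆ X`; (ii) for every infinite `A ⊆ ℕ` there is `y ∈ Y \ X` supported in
`A`; (iii) `c₀₀` is dense in `Y`; (iv) `X` is closed under multiplication by indicator
functions of subsets of `ℕ`.  Then there is a dense vector subspace `F` of `Y` with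
`F ∩ X = {0}`. -/
theorem stmt15
    (X Y : Type*)
    [AddCommGroup X] [Module ℂ X] [UniformSpace X] [IsUniformAddGroup X]
    [ContinuousSMul ℂ X] [CompleteSpace X] [TopologicalSpace.MetrizableSpace X]
    [AddCommGroup Y] [Module ℂ Y] [UniformSpace Y] [IsUniformAddGroup Y]
    [ContinuousSMul ℂ Y] [CompleteSpace Y] [TopologicalSpace.MetrizableSpace Y]
    (ιX : X →ₗ[ℂ] (ℕ → ℂ)) (ιY : Y →ₗ[ℂ] (ℕ → ℂ))
    (hιX : Function.Injective ιX) (hιY : Function.Injective ιY)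
    (hsub : Set.range ιX ⊆ Set.range ιY)
    (hne : Set.range ιX ≠ Set.range ιY)
    (h1 : ∀ a : ℕ → ℂ, (∃ N, ∀ n ≥ N, a n = 0) → a ∈ Set.range ιX)
    (h2 : ∀ A : Set ℕ, A.Infinite →
      ∃ a ∈ Set.range ιY, a ∉ Set.range ιX ∧ ∀ n ∉ A, a n = 0)
    (h3 : Dense {y : Y | ∃ N, ∀ n ≥ N, ιY y n = 0})
    (h4 : ∀ a ∈ Set.range ιX, ∀ A : Set ℕ,
      A.indicator a ∈ Set.range ιX) :
    ∃ F : Submodule ℂ Y, Dense (F : Set Y) ∧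
      ∀ y ∈ F, ιY y ∈ Set.range ιX → y = 0 :=
  stmt15_general X Y ιX ιY hιY hsub h1 h2 h3 h4
end

section
/- Let X ⊆ Y be F-spaces of complex sequences with X ≠ Y such that: (i) for every infinite A ⊆ ℕ there exists y ∈ Y \ X supported in A; (ii) convergence in Y implies coordinatewise convergence; (iii) X is closed under multiplication by indicator functions of subsets of ℕ. Then there exists a closed infinite-dimensional vector subspace F of Y with F ∩ X = {0}. -/
open Filter Topology

/-!
Split `ℕ` into infinitely many infinite blocks and use (i) to pick, on each block `j`, a sequence
`y_j ∈ Y \ X` supported there. Let `c` be the sequence that agrees with `y_j` on block `j`, and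
take for `F` the vectors of `Y` whose coordinate sequence is, block by block, a multiple of `c`.
It contains every `y_j`, and the `y_j` are linearly independent. Inside the product topology this
condition is closed because each `y_j` has a nonzero coordinate to normalise against, and by (ii)
the coordinate map of `Y` is sequentially continuous, so `F` is closed. Finally, if such a vector
lies in `X`, then by (iii) so does its restriction `t_j • y_j` to block `j`; since `y_j ∉ X` this
forces `t_j = 0` for every `j`.
-/

theorem continuous_of_tendsto_apply {Y α β : Type*} [TopologicalSpace Y] [SequentialSpace Y]
    [TopologicalSpace β] {f : Y → α → β}
    (h : ∀ (u : ℕ → Y) (y : Y), Tendsto u atTop (𝓝 y) →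
      ∀ n, Tendsto (fun m => f (u m) n) atTop (𝓝 (f y n))) :
    Continuous f :=
  continuous_iff_seqContinuous.mpr fun u y hu => tendsto_pi_nhds.mpr (h u y hu)

theorem Nat.infinite_preimage_unpair_fst (j : ℕ) :
    ((fun n : ℕ => n.unpair.1) ⁻¹' {j}).Infinite :=
  Set.infinite_of_injective_forall_mem (f := Nat.pair j)
    (fun _ _ h => (Nat.pair_eq_pair.mp h).2) (fun k => by simp)

section BlockScale

variable {𝕜 α ι : Type*}

def blockScale [CommSemiring 𝕜] (p : α → ι) (c : α → 𝕜) : (ι → 𝕜) →ₗ[𝕜] (α → 𝕜) :=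
  LinearMap.mulRight 𝕜 c ∘ₗ LinearMap.funLeft 𝕜 𝕜 p

@[simp]
theorem blockScale_apply [CommSemiring 𝕜] (p : α → ι) (c : α → 𝕜) (t : ι → 𝕜) (n : α) :
    blockScale p c t n = t (p n) * c n :=
  rfl

theorem blockScale_single [CommSemiring 𝕜] [DecidableEq ι] (p : α → ι) (c : α → 𝕜) (j : ι) :
    blockScale p c (Pi.single j 1) = (p ⁻¹' {j}).indicator c := by
  ext n
  by_cases h : p n = j <;> simp [Set.indicator, h]

variable [Field 𝕜] {p : α → ι} {c : α → 𝕜}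

theorem blockScale_injective (hc : ∀ j, ∃ n, p n = j ∧ c n ≠ 0) :
    Function.Injective (blockScale p c) := by
  refine (injective_iff_map_eq_zero _).mpr fun t ht => funext fun j => ?_
  obtain ⟨n, rfl, hn⟩ := hc j
  simpa [hn] using congrFun ht n

theorem linearIndependent_indicator_preimage (hc : ∀ j, ∃ n, p n = j ∧ c n ≠ 0) :
    LinearIndependent 𝕜 fun j => (p ⁻¹' {j}).indicator c := by
  classical
  simpa only [Function.comp_def, blockScale_single] using
    (Pi.linearIndependent_single_one ι 𝕜).map' (blockScale p c)
      (LinearMap.ker_eq_bot.mpr (blockScale_injective hc))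

theorem mem_range_blockScale_iff {n₀ : ι → α} (hp : ∀ j, p (n₀ j) = j) (hc : ∀ j, c (n₀ j) ≠ 0)
    {a : α → 𝕜} :
    a ∈ LinearMap.range (blockScale p c) ↔ ∀ n, a n * c (n₀ (p n)) = a (n₀ (p n)) * c n := by
  constructor
  · rintro ⟨t, rfl⟩ n
    simp only [blockScale_apply, hp]
    ring
  · intro ha
    refine ⟨fun j => a (n₀ j) / c (n₀ j), funext fun n => ?_⟩
    rw [blockScale_apply, div_mul_eq_mul_div, ← ha n, mul_div_cancel_right₀ _ (hc (p n))]

theorem isClosed_range_blockScale [TopologicalSpace 𝕜] [ContinuousMul 𝕜] [T2Space 𝕜]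
    (hc : ∀ j, ∃ n, p n = j ∧ c n ≠ 0) :
    IsClosed (LinearMap.range (blockScale p c) : Set (α → 𝕜)) := by
  choose n₀ hp hc using hc
  have hrange : (LinearMap.range (blockScale p c) : Set (α → 𝕜)) =
      ⋂ n, {a | a n * c (n₀ (p n)) = a (n₀ (p n)) * c n} := by
    ext a
    simp [mem_range_blockScale_iff hp hc]
  rw [hrange]
  exact isClosed_iInter fun n => isClosed_eq (by fun_prop) (by fun_prop)

theorem disjoint_range_blockScale {P : Submodule 𝕜 (α → 𝕜)}
    (hP : ∀ a ∈ P, ∀ s : Set α, s.indicator a ∈ P) (hc : ∀ j, (p ⁻¹' {j}).indicator c ∉ P) :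
    Disjoint P (LinearMap.range (blockScale p c)) := by
  refine Submodule.disjoint_def.mpr ?_
  rintro _ ha ⟨t, rfl⟩
  funext n
  have hblock : (p ⁻¹' {p n}).indicator (blockScale p c t) =
      t (p n) • (p ⁻¹' {p n}).indicator c := by
    ext m
    by_cases h : p m = p n <;> simp [Set.indicator, h]
  have ht : t (p n) = 0 := by
    by_contra ht
    apply hc (p n)
    simpa [hblock, smul_smul, ht] using P.smul_mem (t (p n))⁻¹ (hP _ ha (p ⁻¹' {p n}))
  simp [ht]

end BlockScale

theorem stmt16_general
    (X Y : Type*)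
    [AddCommGroup X] [Module ℂ X]
    [AddCommGroup Y] [Module ℂ Y] [UniformSpace Y]
    [TopologicalSpace.MetrizableSpace Y]
    (ιX : X →ₗ[ℂ] (ℕ → ℂ)) (ιY : Y →ₗ[ℂ] (ℕ → ℂ))
    (hιY : Function.Injective ιY)
    (h1 : ∀ A : Set ℕ, A.Infinite →
      ∃ a ∈ Set.range ιY, a ∉ Set.range ιX ∧ ∀ n ∉ A, a n = 0)
    (h2 : ∀ (u : ℕ → Y) (y : Y), Tendsto u atTop (𝓝 y) →
      ∀ n, Tendsto (fun m => ιY (u m) n) atTop (𝓝 (ιY y n)))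
    (h3 : ∀ a ∈ Set.range ιX, ∀ A : Set ℕ, A.indicator a ∈ Set.range ιX) :
    ∃ F : Submodule ℂ Y, IsClosed (F : Set Y) ∧ ¬ FiniteDimensional ℂ F ∧
      ∀ y ∈ F, ιY y ∈ Set.range ιX → y = 0 := by
  classical
  set p : ℕ → ℕ := fun n => n.unpair.1
  choose a haY haX hsupp using fun j => h1 (p ⁻¹' {j}) (Nat.infinite_preimage_unpair_fst j)
  choose v hv using haY
  obtain rfl : a = fun j => ιY (v j) := funext fun j => (hv j).symm
  set c : ℕ → ℂ := fun n => ιY (v (p n)) n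
  have hblock (j : ℕ) : (p ⁻¹' {j}).indicator c = ιY (v j) := by
    ext n
    by_cases h : p n = j
    · simp [c, h]
    · simp [h, hsupp j n h]
  have hc (j : ℕ) : ∃ n, p n = j ∧ c n ≠ 0 := by
    have hne : ιY (v j) ≠ 0 := fun h => haX j ⟨0, by simp [h]⟩
    obtain ⟨n, hn⟩ := Function.ne_iff.mp hne
    have hpn : p n = j := not_not.mp fun h => hn (hsupp j n h)
    refine ⟨n, hpn, ?_⟩
    simpa [c, hpn] using hn
  set F := (LinearMap.range (blockScale p c)).comap ιY
  have hvF (j : ℕ) : v j ∈ F := ⟨Pi.single j 1, by rw [blockScale_single, hblock]⟩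
  refine ⟨F, (isClosed_range_blockScale hc).preimage (continuous_of_tendsto_apply h2), ?_, ?_⟩
  · intro hfin
    have hvli : LinearIndependent ℂ v := by
      have hli := linearIndependent_indicator_preimage hc
      simp only [hblock] at hli
      exact hli.of_comp ιY
    exact Module.Finite.not_linearIndependent_of_infinite (fun j => (⟨v j, hvF j⟩ : F))
      (hvli.of_comp F.subtype)
  · intro y hyF hyX
    have hdisj := disjoint_range_blockScale (P := LinearMap.range ιX) h3
      (fun j => by rw [hblock]; exact haX j)
    exact hιY (by rw [map_zero]; exact Submodule.disjoint_def.mp hdisj _ hyX hyF)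

/-- Spaceability lemma.  Let `X ⊆ Y`, `X ≠ Y`, be F-spaces of complex sequences such that
(i) for every infinite `A ⊆ ℕ` there is `y ∈ Y \ X` supported in `A`; (ii) convergence in
`Y` implies coordinatewise convergence; (iii) `X` is closed under multiplication by
indicator functions of subsets of `ℕ`.  Then there is a closed infinite-dimensional vector
subspace `F` of `Y` with `F ∩ X = {0}`. -/
theorem stmt16
    (X Y : Type*)
    [AddCommGroup X] [Module ℂ X] [UniformSpace X] [IsUniformAddGroup X]
    [ContinuousSMul ℂ X] [CompleteSpace X] [TopologicalSpace.MetrizableSpace X]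
    [AddCommGroup Y] [Module ℂ Y] [UniformSpace Y] [IsUniformAddGroup Y]
    [ContinuousSMul ℂ Y] [CompleteSpace Y] [TopologicalSpace.MetrizableSpace Y]
    (ιX : X →ₗ[ℂ] (ℕ → ℂ)) (ιY : Y →ₗ[ℂ] (ℕ → ℂ))
    (hιX : Function.Injective ιX) (hιY : Function.Injective ιY)
    (hsub : Set.range ιX ⊆ Set.range ιY)
    (hne : Set.range ιX ≠ Set.range ιY)
    (h1 : ∀ A : Set ℕ, A.Infinite →
      ∃ a ∈ Set.range ιY, a ∉ Set.range ιX ∧ ∀ n ∉ A, a n = 0)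
    (h2 : ∀ (u : ℕ → Y) (y : Y), Tendsto u atTop (𝓝 y) →
      ∀ n, Tendsto (fun m => ιY (u m) n) atTop (𝓝 (ιY y n)))
    (h3 : ∀ a ∈ Set.range ιX, ∀ A : Set ℕ, A.indicator a ∈ Set.range ιX) :
    ∃ F : Submodule ℂ Y, IsClosed (F : Set Y) ∧ ¬ FiniteDimensional ℂ F ∧
      ∀ y ∈ F, ιY y ∈ Set.range ιX → y = 0 :=
  stmt16_general X Y ιX ιY hιY h1 h2 h3
end
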